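/- arXiv:1802.01365 — 2 statements merged into one kernel-verified Lean document; each statement's English description precedes it below -/
import Mathlib

section
/- Existence of solutions of the learning problem (Theorem 4.1): Assume hypotheses (H1)–(H6) and let u† ∈ Ũ. Then the learning problem (LP) has a solution: there exist α* ∈ [α̲,ᾱ] and (y*,u*) ∈ F_ad solving (P_{α*,y_δ}) such that ‖u* − u†‖²_Ũ ≤ ‖u_α − u†‖²_Ũ for every α ∈ [α̲,ᾱ] and every (y_α,u_α) ∈ F_ad solving (P_{α,y_δ}). -/
/-!
The direct method, used twice. For a fixed parameter `α ≥ α̲ > 0`, the regularization term of a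
minimizing sequence of `J_α` is bounded, so coercivity of `∑ Ψ_i` bounds the controls and (H4) the
states; reflexivity gives a weakly convergent subsequence (Kakutani, plus metrizability of the
weak topology on the separable closed span of the sequence). The weak limit is feasible by Mazur
(closed convex sets are weakly closed) and (H3), and minimizes `J_α` because `J` is jointly lower
semicontinuous in the weak topology and the parameter, while `J_α(q)` is continuous in `α`.
The same argument shows that weak limits of solutions of `(P_{αₙ})` with `αₙ → α*` solve `(P_{α*})`.
Applied to a minimizing sequence of `(LP)`, whose parameters converge along a subsequence in the
compact box `[α̲, ᾱ]`, it yields a solution of `(LP)`, since `u ↦ ‖u − u†‖²` is convex and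
continuous, hence weakly lower semicontinuous.
-/

open Filter Topology ENNReal
open scoped RealInnerProductSpace

def WeakConv {X : Type*} [NormedAddCommGroup X] [NormedSpace ℝ X]
    (x : ℕ → X) (x₀ : X) : Prop :=
  ∀ f : X →L[ℝ] ℝ, Tendsto (fun n => f (x n)) atTop (𝓝 (f x₀))

/-- The feasible set `F_ad` of the lower level problem. -/
def Fad {Y U Z : Type*} [Zero Z] (Uad : Set U) (e : Y → U → Z) : Set (Y × U) :=
  {p | p.2 ∈ Uad ∧ e p.1 p.2 = 0}

/-- The Tikhonov functional `J_{α,yδ}` of the lower level problem, with values in `[0,∞]`. -/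
noncomputable def Jfun {Y U Ytil : Type*} [NormedAddCommGroup Y] [NormedSpace ℝ Y]
    [NormedAddCommGroup U] [NormedSpace ℝ U]
    [NormedAddCommGroup Ytil] [InnerProductSpace ℝ Ytil]
    {m r : ℕ} (ιY : Y →L[ℝ] Ytil) (Ψ : Fin r → U → ℝ≥0∞)
    (α : Fin r → ℝ) (yδ : Fin m → Ytil) (p : Y × U) : ℝ≥0∞ :=
  ENNReal.ofReal ((1 / (2 * (m : ℝ))) * ∑ j, ‖ιY p.1 - yδ j‖ ^ 2)
    + ∑ i, ENNReal.ofReal (α i) * Ψ i p.2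

/-- `p = (y,u)` solves the lower level problem `(P_{α,yδ})`. -/
def Solves {Y U Z Ytil : Type*} [NormedAddCommGroup Y] [NormedSpace ℝ Y]
    [NormedAddCommGroup U] [NormedSpace ℝ U]
    [NormedAddCommGroup Ytil] [InnerProductSpace ℝ Ytil] [Zero Z]
    {m r : ℕ} (Uad : Set U) (e : Y → U → Z) (ιY : Y →L[ℝ] Ytil)
    (Ψ : Fin r → U → ℝ≥0∞) (α : Fin r → ℝ) (yδ : Fin m → Ytil)
    (p : Y × U) : Prop :=
  p ∈ Fad Uad e ∧ ∀ q ∈ Fad Uad e, Jfun ιY Ψ α yδ p ≤ Jfun ιY Ψ α yδ q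

namespace WeakConv

variable {X X' : Type*} [NormedAddCommGroup X] [NormedSpace ℝ X]
  [NormedAddCommGroup X'] [NormedSpace ℝ X']

theorem comp_strictMono {x : ℕ → X} {x₀ : X} (h : WeakConv x x₀) {φ : ℕ → ℕ}
    (hφ : StrictMono φ) : WeakConv (x ∘ φ) x₀ :=
  fun f => (h f).comp hφ.tendsto_atTop

theorem fst {p : ℕ → X × X'} {p₀ : X × X'} (h : WeakConv p p₀) :
    WeakConv (fun n => (p n).1) p₀.1 :=
  fun f => h (f.comp (ContinuousLinearMap.fst ℝ X X'))

theorem snd {p : ℕ → X × X'} {p₀ : X × X'} (h : WeakConv p p₀) :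
    WeakConv (fun n => (p n).2) p₀.2 :=
  fun f => h (f.comp (ContinuousLinearMap.snd ℝ X X'))

theorem prodMk {x : ℕ → X} {x₀ : X} {y : ℕ → X'} {y₀ : X'}
    (hx : WeakConv x x₀) (hy : WeakConv y y₀) :
    WeakConv (fun n => (x n, y n)) (x₀, y₀) := by
  intro f
  simpa only [← ContinuousLinearMap.comp_inl_add_comp_inr] using
    (hx (f.comp (.inl ℝ X X'))).add (hy (f.comp (.inr ℝ X X')))

end WeakConv

theorem Convex.mem_of_weakConv {X : Type*} [NormedAddCommGroup X] [NormedSpace ℝ X]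
    {s : Set X} (hs : Convex ℝ s) (hs' : IsClosed s) {x : ℕ → X} {x₀ : X}
    (hx : ∀ n, x n ∈ s) (h : WeakConv x x₀) : x₀ ∈ s := by
  by_contra hx₀
  obtain ⟨f, u, hfs, hfx₀⟩ := geometric_hahn_banach_closed_point hs hs' hx₀
  exact (le_of_tendsto' (h f) fun n => (hfs _ (hx n)).le).not_gt hfx₀

theorem TopologicalSpace.IsSeparable.exists_seq_dual_separating {X : Type*}
    [NormedAddCommGroup X] [NormedSpace ℝ X] {s : Set X} (hs : TopologicalSpace.IsSeparable s) :
    ∃ g : ℕ → StrongDual ℝ X, ∀ x ∈ s, (∀ j, g j x = 0) → x = 0 := by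
  obtain ⟨t, htc, hst⟩ := hs
  obtain ⟨d, hd⟩ := (htc.insert 0).exists_eq_range (Set.insert_nonempty 0 t)
  choose g hg_norm hg_d using fun j => exists_dual_vector'' ℝ (d j)
  refine ⟨g, fun x hx hgx => norm_le_zero_iff.1 (le_of_forall_pos_le_add fun ε hε => ?_)⟩
  obtain ⟨_, ⟨j, rfl⟩, hj⟩ : ∃ y ∈ Set.range d, dist x y < ε / 2 :=
    Metric.mem_closure_iff.1 (closure_mono (hd ▸ Set.subset_insert 0 t) (hst hx)) _ (half_pos hε)
  -- `g j` norms `d j` and kills `x`, so `‖d j‖ ≤ ‖d j - x‖`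
  have hdj : ‖d j‖ ≤ ‖d j - x‖ := by
    have : g j (d j - x) = ‖d j‖ := by simpa [hgx] using hg_d j
    calc ‖d j‖ = g j (d j - x) := this.symm
      _ ≤ 1 * ‖d j - x‖ := (Real.le_norm_self _).trans ((g j).le_of_opNorm_le (hg_norm j) _)
      _ = ‖d j - x‖ := one_mul _
  rw [dist_eq_norm] at hj
  linarith [norm_le_norm_add_norm_sub' x (d j), norm_sub_rev x (d j)]

theorem continuous_dual_toWeakSpace_symm {X : Type*} [NormedAddCommGroup X] [NormedSpace ℝ X]
    (f : StrongDual ℝ X) : Continuous fun k : WeakSpace ℝ X => f ((toWeakSpace ℝ X).symm k) :=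
  WeakBilin.eval_continuous _ f

open NormedSpace TopologicalSpace in
theorem exists_weakConv_subseq_of_bounded {X : Type*} [NormedAddCommGroup X] [NormedSpace ℝ X]
    (hX : Function.Surjective (inclusionInDoubleDual ℝ X)) {x : ℕ → X} {C : ℝ}
    (hC : ∀ n, ‖x n‖ ≤ C) :
    ∃ (x₀ : X) (φ : ℕ → ℕ), StrictMono φ ∧ WeakConv (x ∘ φ) x₀ := by
  set W := toWeakSpace ℝ X
  set M := (Submodule.span ℝ (Set.range x)).topologicalClosure
  set K := closure (W '' Set.range x)
  have hK : IsCompact K := by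
    refine isCompact_closure_of_isBounded ℝ X _ ?_ fun ψ _ => ?_
    · rw [Set.preimage_image_eq _ W.injective]
      exact isBounded_iff_forall_norm_le.2 ⟨C, by rintro _ ⟨n, rfl⟩; exact hC n⟩
    · -- by reflexivity, the weak-star closure in the bidual adds no points
      obtain ⟨y, hy⟩ := hX (WeakDual.toStrongDual ψ)
      exact ⟨W y, hy⟩
  have hKM : K ⊆ W '' M := by
    have hxM : Set.range x ⊆ M := Submodule.subset_span.trans (Submodule.le_topologicalClosure _)
    calc K ⊆ closure (W '' M) := closure_mono (Set.image_mono hxM)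
      _ = W '' M := by
        rw [← Convex.toWeakSpace_closure ℝ M.convex,
          (Submodule.isClosed_topologicalClosure _).closure_eq]
  obtain ⟨g, hg⟩ : ∃ g : ℕ → StrongDual ℝ X, ∀ z ∈ M, (∀ j, g j z = 0) → z = 0 := by
    refine IsSeparable.exists_seq_dual_separating ?_
    rw [Submodule.topologicalClosure_coe]
    exact (Set.countable_range x).isSeparable.span.closure
  have : CompactSpace K := isCompact_iff_compactSpace.1 hK
  have hgK : ∀ f : StrongDual ℝ X, Continuous fun k : K => f (W.symm k) := fun f =>
    (continuous_dual_toWeakSpace_symm f).comp continuous_subtype_val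
  -- the functionals `g j` separate the points of `K ⊆ M`, which makes the compact set `K` metrizable
  have : MetrizableSpace K := by
    refine Metric.PiNatEmbed.TopologicalSpace.MetrizableSpace.of_countable_separating
      (fun j (k : K) => g j (W.symm k)) (fun j => hgK (g j)) ?_
    rintro ⟨k₁, hk₁⟩ ⟨k₂, hk₂⟩ hne
    obtain ⟨m₁, hm₁, rfl⟩ := hKM hk₁
    obtain ⟨m₂, hm₂, rfl⟩ := hKM hk₂
    by_contra! heq
    refine hne (Subtype.ext (congrArg W (sub_eq_zero.1 (hg _ (M.sub_mem hm₁ hm₂) fun j => ?_))))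
    simpa [sub_eq_zero] using heq j
  obtain ⟨k₀, φ, hφ, hlim⟩ := SeqCompactSpace.tendsto_subseq
    fun n => (⟨W (x n), subset_closure ⟨x n, ⟨n, rfl⟩, rfl⟩⟩ : K)
  exact ⟨W.symm k₀, φ, hφ, fun f => ((hgK f).tendsto k₀).comp hlim⟩

theorem exists_weakConv_subseq_of_bounded_prod {X X' : Type*} [NormedAddCommGroup X]
    [NormedSpace ℝ X] [NormedAddCommGroup X'] [NormedSpace ℝ X']
    (hX : Function.Surjective (NormedSpace.inclusionInDoubleDual ℝ X))
    (hX' : Function.Surjective (NormedSpace.inclusionInDoubleDual ℝ X'))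
    {p : ℕ → X × X'} {C C' : ℝ} (hC : ∀ n, ‖(p n).1‖ ≤ C) (hC' : ∀ n, ‖(p n).2‖ ≤ C') :
    ∃ (p₀ : X × X') (φ : ℕ → ℕ), StrictMono φ ∧ WeakConv (p ∘ φ) p₀ := by
  obtain ⟨x₀', φ, hφ, hx'⟩ := exists_weakConv_subseq_of_bounded hX' hC'
  obtain ⟨x₀, ψ, hψ, hx⟩ := exists_weakConv_subseq_of_bounded hX fun n => hC (φ n)
  exact ⟨(x₀, x₀'), φ ∘ ψ, hφ.comp hψ, hx.prodMk (hx'.comp_strictMono hψ)⟩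

def WeakSeqLSC {X : Type*} [NormedAddCommGroup X] [NormedSpace ℝ X] (f : X → ℝ≥0∞) : Prop :=
  ∀ (x : ℕ → X) (x₀ : X), WeakConv x x₀ → f x₀ ≤ liminf (fun n => f (x n)) atTop

theorem ConvexOn.weakSeqLSC_ofReal {X : Type*} [NormedAddCommGroup X] [NormedSpace ℝ X]
    {f : X → ℝ} (hf : ConvexOn ℝ Set.univ f) (hc : Continuous f) :
    WeakSeqLSC fun x => ENNReal.ofReal (f x) := by
  intro x x₀ hx
  by_contra! hlt
  obtain ⟨t, hlim, ht⟩ := exists_between hlt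
  obtain ⟨φ, hφ, hxφ⟩ :=
    extraction_of_frequently_atTop (frequently_lt_of_liminf_lt (by isBoundedDefault) hlim)
  have hsub : ∀ n, x (φ n) ∈ {y | f y ≤ t.toReal} := fun n =>
    (ENNReal.ofReal_le_iff_le_toReal ht.ne_top).1 (hxφ n).le
  have hconv : Convex ℝ {y | f y ≤ t.toReal} := by
    simpa using hf.convex_le t.toReal
  have hx₀ := hconv.mem_of_weakConv (isClosed_le hc continuous_const) hsub (hx.comp_strictMono hφ)
  exact ht.not_ge (ENNReal.ofReal_le_of_le_toReal hx₀)

theorem convexOn_norm_sub_sq {X X' : Type*} [NormedAddCommGroup X] [NormedSpace ℝ X]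
    [NormedAddCommGroup X'] [NormedSpace ℝ X'] (A : X →L[ℝ] X') (b : X') :
    ConvexOn ℝ Set.univ fun x => ‖A x - b‖ ^ 2 := by
  have := ((convexOn_norm convex_univ).pow (fun _ _ => norm_nonneg _) 2).comp_affineMap
    (A.toLinearMap.toAffineMap - AffineMap.const ℝ X b)
  rw [Set.preimage_univ] at this
  exact this

theorem convexOn_finsetSum {ι X : Type*} [AddCommGroup X] [Module ℝ X] {s : Set X} (hs : Convex ℝ s)
    (t : Finset ι) {f : ι → X → ℝ} (hf : ∀ i ∈ t, ConvexOn ℝ s (f i)) :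
    ConvexOn ℝ s fun x => ∑ i ∈ t, f i x := by
  classical
  induction t using Finset.induction_on with
  | empty => simpa using convexOn_const 0 hs
  | insert i t hi ih =>
    simp only [Finset.sum_insert hi]
    exact (hf i (t.mem_insert_self i)).add (ih fun j hj => hf j (Finset.mem_insert_of_mem hj))

theorem ENNReal.liminf_add_liminf_le (u v : ℕ → ℝ≥0∞) :
    liminf u atTop + liminf v atTop ≤ liminf (u + v) atTop := by
  simp only [liminf_eq_iSup_iInf_of_nat]
  refine ENNReal.iSup_add_iSup_le fun n m => le_iSup_of_le (max n m) (le_iInf₂ fun i hi => ?_)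
  exact add_le_add (iInf₂_le i (le_of_max_le_left hi)) (iInf₂_le i (le_of_max_le_right hi))

theorem ENNReal.sum_liminf_le_liminf_sum {ι : Type*} (s : Finset ι) (u : ι → ℕ → ℝ≥0∞) :
    ∑ i ∈ s, liminf (u i) atTop ≤ liminf (fun n => ∑ i ∈ s, u i n) atTop := by
  classical
  induction s using Finset.induction_on with
  | empty => simp
  | insert i s hi ih =>
    simp only [Finset.sum_insert hi]
    exact (add_le_add le_rfl ih).trans (ENNReal.liminf_add_liminf_le _ _)

theorem ENNReal.exists_mem_forall_le_add {α : Type*} {s : Set α} (hs : s.Nonempty)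
    (f : α → ℝ≥0∞) {ε : ℝ≥0∞} (hε : ε ≠ 0) : ∃ a ∈ s, ∀ b ∈ s, f a ≤ f b + ε := by
  by_cases htop : ⨅ b ∈ s, f b = ⊤
  · obtain ⟨a, ha⟩ := hs
    exact ⟨a, ha, fun b hb => by simp_all⟩
  · obtain ⟨a, ha, hlt⟩ : ∃ a ∈ s, f a < (⨅ b ∈ s, f b) + ε := by
      simpa only [iInf_lt_iff, exists_prop] using ENNReal.lt_add_right htop hε
    exact ⟨a, ha, fun b hb => hlt.le.trans (add_le_add (biInf_le f hb) le_rfl)⟩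

theorem ENNReal.exists_minimizing_seq {α : Type*} {s : Set α} (hs : s.Nonempty)
    (f : α → ℝ≥0∞) :
    ∃ (a : ℕ → α) (ε : ℕ → ℝ≥0∞), (∀ n, a n ∈ s) ∧ (∀ n, ε n ≤ 1) ∧
      Tendsto ε atTop (𝓝 0) ∧ ∀ n, ∀ b ∈ s, f (a n) ≤ f b + ε n := by
  choose a ha hmin using fun n : ℕ =>
    ENNReal.exists_mem_forall_le_add hs f (ε := ((n : ℝ≥0∞) + 1)⁻¹) (by simp)
  refine ⟨a, _, ha, fun n => ENNReal.inv_le_one.2 le_add_self, ?_, hmin⟩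
  have := ENNReal.tendsto_inv_nat_nhds_zero.comp (tendsto_add_atTop_nat 1)
  simpa [Function.comp_def] using this

def Coercive {X : Type*} [NormedAddCommGroup X] (f : X → ℝ≥0∞) : Prop :=
  ∀ x : ℕ → X, Tendsto (fun n => ‖x n‖) atTop atTop → Tendsto (fun n => f (x n)) atTop (𝓝 ⊤)

theorem Coercive.exists_norm_le {X : Type*} [NormedAddCommGroup X] {f : X → ℝ≥0∞}
    (hf : Coercive f) {x : ℕ → X} {B : ℝ≥0∞} (hB : B ≠ ⊤) (hx : ∀ n, f (x n) ≤ B) :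
    ∃ C : ℝ, ∀ n, ‖x n‖ ≤ C := by
  by_contra! hunb
  choose N hN using hunb
  have hlim : Tendsto (fun k : ℕ => ‖x (N k)‖) atTop atTop :=
    tendsto_atTop_mono (fun k => (hN k).le) tendsto_natCast_atTop_atTop
  obtain ⟨k, hk⟩ := ((hf _ hlim).eventually (lt_mem_nhds hB.lt_top)).exists
  exact (hx (N k)).not_gt hk

section LowerLevelProblem

variable {Y U Z Ytil : Type*} [NormedAddCommGroup Y] [NormedSpace ℝ Y]
  [NormedAddCommGroup U] [NormedSpace ℝ U] [NormedAddCommGroup Ytil] [InnerProductSpace ℝ Ytil]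
  [Zero Z] {m r : ℕ} {ιY : Y →L[ℝ] Ytil} {Uad : Set U} {e : Y → U → Z}
  {Ψ : Fin r → U → ℝ≥0∞} {yδ : Fin m → Ytil}

variable (Uad e) in
def ConstraintWeakSeqClosed : Prop :=
  ∀ (y : ℕ → Y) (u : ℕ → U) (ybar : Y) (ubar : U),
    (∀ n, u n ∈ Uad) → ubar ∈ Uad → (∀ n, e (y n) (u n) = 0) →
    WeakConv (fun n => (y n, u n)) (ybar, ubar) → e ybar ubar = 0

variable (Uad e) in
def StateBoundedByControl : Prop :=
  ∀ (y : ℕ → Y) (u : ℕ → U), (∀ n, (y n, u n) ∈ Fad Uad e) →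
    (∃ C : ℝ, ∀ n, ‖u n‖ ≤ C) → ∃ C : ℝ, ∀ n, ‖y n‖ ≤ C

theorem mem_fad_of_weakConv (hUad : Convex ℝ Uad) (hUad' : IsClosed Uad)
    (he : ConstraintWeakSeqClosed Uad e) {p : ℕ → Y × U} {p₀ : Y × U}
    (hp : ∀ n, p n ∈ Fad Uad e) (hlim : WeakConv p p₀) : p₀ ∈ Fad Uad e := by
  have hu₀ : p₀.2 ∈ Uad := hUad.mem_of_weakConv hUad' (fun n => (hp n).1) hlim.snd
  exact ⟨hu₀, he _ _ p₀.1 p₀.2 (fun n => (hp n).1) hu₀ (fun n => (hp n).2) hlim⟩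

theorem jfun_mono {α β : Fin r → ℝ} (hαβ : α ≤ β) (p : Y × U) :
    Jfun ιY Ψ α yδ p ≤ Jfun ιY Ψ β yδ p := by
  unfold Jfun
  gcongr with i
  exact hαβ i

theorem ofReal_mul_le_jfun (α : Fin r → ℝ) (p : Y × U) (i : Fin r) :
    ENNReal.ofReal (α i) * Ψ i p.2 ≤ Jfun ιY Ψ α yδ p :=
  (Finset.single_le_sum (f := fun j => ENNReal.ofReal (α j) * Ψ j p.2) (fun _ _ => zero_le)
    (Finset.mem_univ i)).trans le_add_self

theorem jfun_ne_top (α : Fin r → ℝ) {p : Y × U} (hp : ∑ i, Ψ i p.2 ≠ ⊤) :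
    Jfun ιY Ψ α yδ p ≠ ⊤ := by
  refine ENNReal.add_ne_top.2 ⟨ENNReal.ofReal_ne_top, ENNReal.sum_ne_top.2 fun i _ => ?_⟩
  exact ENNReal.mul_ne_top ENNReal.ofReal_ne_top fun h => hp (ENNReal.sum_eq_top.2 ⟨i, by simp, h⟩)

theorem tendsto_jfun {α : ℕ → Fin r → ℝ} {α₀ : Fin r → ℝ} (hα : Tendsto α atTop (𝓝 α₀))
    (hα₀ : ∀ i, 0 < α₀ i) (p : Y × U) :
    Tendsto (fun n => Jfun ιY Ψ (α n) yδ p) atTop (𝓝 (Jfun ιY Ψ α₀ yδ p)) := by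
  refine tendsto_const_nhds.add (tendsto_finsetSum _ fun i _ => ?_)
  -- multiplication on `ℝ≥0∞` is continuous at `(a, ⊤)` only for `a ≠ 0`
  exact ENNReal.Tendsto.mul_const
    ((ENNReal.continuous_ofReal.tendsto _).comp ((continuous_apply i).tendsto _ |>.comp hα))
    (Or.inl (ENNReal.ofReal_pos.2 (hα₀ i)).ne')

theorem jfun_le_liminf (hΨ : ∀ i, WeakSeqLSC (Ψ i)) {α : ℕ → Fin r → ℝ} {α₀ : Fin r → ℝ}
    (hα : Tendsto α atTop (𝓝 α₀)) {p : ℕ → Y × U} {p₀ : Y × U} (hp : WeakConv p p₀) :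
    Jfun ιY Ψ α₀ yδ p₀ ≤ liminf (fun n => Jfun ιY Ψ (α n) yδ (p n)) atTop := by
  have hdata : WeakSeqLSC fun y : Y =>
      ENNReal.ofReal (1 / (2 * (m : ℝ)) * ∑ j, ‖ιY y - yδ j‖ ^ 2) :=
    ConvexOn.weakSeqLSC_ofReal ((convexOn_finsetSum convex_univ _ fun j _ =>
      convexOn_norm_sub_sq ιY (yδ j)).smul (by positivity)) (by fun_prop)
  have hreg : ∀ i, ENNReal.ofReal (α₀ i) * Ψ i p₀.2 ≤
      liminf (fun n => ENNReal.ofReal (α n i) * Ψ i (p n).2) atTop := by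
    intro i
    have hαi : Tendsto (fun n => ENNReal.ofReal (α n i)) atTop (𝓝 (ENNReal.ofReal (α₀ i))) :=
      (ENNReal.continuous_ofReal.tendsto _).comp ((continuous_apply i).tendsto _ |>.comp hα)
    calc ENNReal.ofReal (α₀ i) * Ψ i p₀.2
        ≤ liminf (fun n => ENNReal.ofReal (α n i)) atTop * liminf (fun n => Ψ i (p n).2) atTop :=
          hαi.liminf_eq ▸ mul_le_mul_right (hΨ i _ _ hp.snd) _
      _ ≤ _ := ENNReal.le_liminf_mul
  exact (add_le_add (hdata _ _ hp.fst)
    ((Finset.sum_le_sum fun i _ => hreg i).trans (ENNReal.sum_liminf_le_liminf_sum _ _))).trans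
    (ENNReal.liminf_add_liminf_le _ _)

theorem exists_norm_control_le (hcoer : Coercive fun u => ∑ i, Ψ i u)
    {q₀ : Y × U} (hq₀ : q₀ ∈ Fad Uad e) (hq₀' : ∑ i, Ψ i q₀.2 ≠ ⊤)
    {αlo αhi : Fin r → ℝ} (hαlo : ∀ i, 0 < αlo i) {α : ℕ → Fin r → ℝ}
    (hα : ∀ n, α n ∈ Set.Icc αlo αhi) {ε : ℕ → ℝ≥0∞} (hε1 : ∀ n, ε n ≤ 1) {p : ℕ → Y × U}
    (hmin : ∀ n, ∀ q ∈ Fad Uad e, Jfun ιY Ψ (α n) yδ (p n) ≤ Jfun ιY Ψ (α n) yδ q + ε n) :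
    ∃ C : ℝ, ∀ n, ‖(p n).2‖ ≤ C := by
  set B := Jfun ιY Ψ αhi yδ q₀ + 1
  have hJ : ∀ n, Jfun ιY Ψ (α n) yδ (p n) ≤ B := fun n =>
    (hmin n q₀ hq₀).trans (add_le_add (jfun_mono (hα n).2 q₀) (hε1 n))
  have hΨ : ∀ n i, Ψ i (p n).2 ≤ B / ENNReal.ofReal (αlo i) := fun n i => by
    rw [ENNReal.le_div_iff_mul_le (Or.inl (ENNReal.ofReal_pos.2 (hαlo i)).ne')
      (Or.inl ENNReal.ofReal_ne_top), mul_comm]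
    exact (mul_le_mul_left (ENNReal.ofReal_le_ofReal ((hα n).1 i)) _).trans
      ((ofReal_mul_le_jfun _ _ i).trans (hJ n))
  refine hcoer.exists_norm_le ?_ fun n => Finset.sum_le_sum fun i _ => hΨ n i
  exact ENNReal.sum_ne_top.2 fun i _ => ENNReal.div_ne_top
    (ENNReal.add_ne_top.2 ⟨jfun_ne_top _ hq₀', ENNReal.one_ne_top⟩)
    (ENNReal.ofReal_pos.2 (hαlo i)).ne'

theorem exists_weakConv_subseq_solves
    (hYrefl : Function.Surjective (NormedSpace.inclusionInDoubleDual ℝ Y))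
    (hUrefl : Function.Surjective (NormedSpace.inclusionInDoubleDual ℝ U))
    (hUad : Convex ℝ Uad) (hUad' : IsClosed Uad) (he : ConstraintWeakSeqClosed Uad e)
    (hstate : StateBoundedByControl Uad e) (hcoer : Coercive fun u => ∑ i, Ψ i u)
    (hΨ : ∀ i, WeakSeqLSC (Ψ i)) {q₀ : Y × U} (hq₀ : q₀ ∈ Fad Uad e)
    (hq₀' : ∑ i, Ψ i q₀.2 ≠ ⊤) {αlo αhi : Fin r → ℝ} (hαlo : ∀ i, 0 < αlo i)
    {α : ℕ → Fin r → ℝ} (hα : ∀ n, α n ∈ Set.Icc αlo αhi) {α₀ : Fin r → ℝ}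
    (hα₀ : Tendsto α atTop (𝓝 α₀)) {ε : ℕ → ℝ≥0∞} (hε1 : ∀ n, ε n ≤ 1)
    (hε : Tendsto ε atTop (𝓝 0)) {p : ℕ → Y × U} (hp : ∀ n, p n ∈ Fad Uad e)
    (hmin : ∀ n, ∀ q ∈ Fad Uad e, Jfun ιY Ψ (α n) yδ (p n) ≤ Jfun ιY Ψ (α n) yδ q + ε n) :
    ∃ (p₀ : Y × U) (φ : ℕ → ℕ), StrictMono φ ∧ WeakConv (p ∘ φ) p₀ ∧
      Solves Uad e ιY Ψ α₀ yδ p₀ := by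
  obtain ⟨Cu, hCu⟩ := exists_norm_control_le hcoer hq₀ hq₀' hαlo hα hε1 hmin
  obtain ⟨Cy, hCy⟩ := hstate (fun n => (p n).1) (fun n => (p n).2) hp ⟨Cu, hCu⟩
  obtain ⟨p₀, φ, hφ, hlim⟩ := exists_weakConv_subseq_of_bounded_prod hYrefl hUrefl hCy hCu
  have hα₀pos : ∀ i, 0 < α₀ i := fun i =>
    (hαlo i).trans_le ((isClosed_Icc.mem_of_tendsto hα₀ (.of_forall hα)).1 i)
  refine ⟨p₀, φ, hφ, hlim, mem_fad_of_weakConv hUad hUad' he (fun n => hp (φ n)) hlim,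
    fun q hq => ?_⟩
  calc Jfun ιY Ψ α₀ yδ p₀
      ≤ liminf (fun n => Jfun ιY Ψ (α (φ n)) yδ (p (φ n))) atTop :=
        jfun_le_liminf hΨ (hα₀.comp hφ.tendsto_atTop) hlim
    _ ≤ liminf ((fun n => Jfun ιY Ψ (α (φ n)) yδ q) + ε ∘ φ) atTop :=
        liminf_le_liminf (.of_forall fun n => hmin (φ n) q hq)
    _ = Jfun ιY Ψ α₀ yδ q := by
        rw [ENNReal.liminf_add_of_right_tendsto_zero (hε.comp hφ.tendsto_atTop)]
        exact ((tendsto_jfun hα₀ hα₀pos q).comp hφ.tendsto_atTop).liminf_eq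

theorem exists_solves
    (hYrefl : Function.Surjective (NormedSpace.inclusionInDoubleDual ℝ Y))
    (hUrefl : Function.Surjective (NormedSpace.inclusionInDoubleDual ℝ U))
    (hUad : Convex ℝ Uad) (hUad' : IsClosed Uad) (he : ConstraintWeakSeqClosed Uad e)
    (hstate : StateBoundedByControl Uad e) (hcoer : Coercive fun u => ∑ i, Ψ i u)
    (hΨ : ∀ i, WeakSeqLSC (Ψ i)) {q₀ : Y × U} (hq₀ : q₀ ∈ Fad Uad e)
    (hq₀' : ∑ i, Ψ i q₀.2 ≠ ⊤) {αlo αhi : Fin r → ℝ} (hαlo : ∀ i, 0 < αlo i)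
    {α : Fin r → ℝ} (hα : α ∈ Set.Icc αlo αhi) : ∃ p, Solves Uad e ιY Ψ α yδ p := by
  obtain ⟨p, ε, hp, hε1, hε, hmin⟩ := ENNReal.exists_minimizing_seq ⟨q₀, hq₀⟩ (Jfun ιY Ψ α yδ)
  obtain ⟨p₀, -, -, -, hp₀⟩ := exists_weakConv_subseq_solves hYrefl hUrefl hUad hUad' he hstate
    hcoer hΨ hq₀ hq₀' hαlo (fun _ => hα) tendsto_const_nhds hε1 hε hp hmin
  exact ⟨p₀, hp₀⟩

end LowerLevelProblem

variable {Y U Util Ytil Z : Type*}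
  [NormedAddCommGroup Y] [NormedSpace ℝ Y] [CompleteSpace Y]
  [NormedAddCommGroup U] [NormedSpace ℝ U] [CompleteSpace U]
  [NormedAddCommGroup Util] [InnerProductSpace ℝ Util] [CompleteSpace Util]
  [NormedAddCommGroup Ytil] [InnerProductSpace ℝ Ytil] [CompleteSpace Ytil]
  [NormedAddCommGroup Z] [NormedSpace ℝ Z] [CompleteSpace Z]

theorem learning_problem_has_solution_general
    (hYrefl : Function.Surjective (NormedSpace.inclusionInDoubleDual ℝ Y))
    (hUrefl : Function.Surjective (NormedSpace.inclusionInDoubleDual ℝ U))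
    {m r : ℕ}
    (ιY : Y →L[ℝ] Ytil)
    (Uad : Set U) (e : Y → U → Z) (Ψ : Fin r → U → ℝ≥0∞)
    (αlo αhi : Fin r → ℝ) (hαpos : ∀ i, 0 < αlo i) (hαle : ∀ i, αlo i ≤ αhi i)
    (hH1 : Convex ℝ Uad ∧ IsClosed Uad)
    (hH3 : ∀ (y : ℕ → Y) (u : ℕ → U) (ybar : Y) (ubar : U),
      (∀ n, u n ∈ Uad) → ubar ∈ Uad → (∀ n, e (y n) (u n) = 0) →
      WeakConv (fun n => (y n, u n)) (ybar, ubar) → e ybar ubar = 0)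
    (hH4 : ∀ (y : ℕ → Y) (u : ℕ → U), (∀ n, (y n, u n) ∈ Fad Uad e) →
      (∃ C : ℝ, ∀ n, ‖u n‖ ≤ C) → ∃ C : ℝ, ∀ n, ‖y n‖ ≤ C)
    (hH5coer : ∀ u : ℕ → U, Tendsto (fun n => ‖u n‖) atTop atTop →
      Tendsto (fun n => ∑ i, Ψ i (u n)) atTop (𝓝 (⊤ : ℝ≥0∞)))
    (hH5prop : ∃ p ∈ Fad Uad e, ∑ i, Ψ i p.2 ≠ ⊤)
    (hH6 : ∀ (i : Fin r) (u : ℕ → U) (ubar : U), WeakConv u ubar →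
      Ψ i ubar ≤ Filter.liminf (fun n => Ψ i (u n)) atTop)
    (ιU : U →L[ℝ] Util)
    (udag : Util) (yδ : Fin m → Ytil) :
    ∃ αstar : Fin r → ℝ, (∀ i, αlo i ≤ αstar i ∧ αstar i ≤ αhi i) ∧
      ∃ p : Y × U, Solves Uad e ιY Ψ αstar yδ p ∧
        ∀ α : Fin r → ℝ, (∀ i, αlo i ≤ α i ∧ α i ≤ αhi i) →
          ∀ q : Y × U, Solves Uad e ιY Ψ α yδ q →
            ‖ιU p.2 - udag‖ ^ 2 ≤ ‖ιU q.2 - udag‖ ^ 2 := by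
  have hbox : ∀ α : Fin r → ℝ, α ∈ Set.Icc αlo αhi ↔ ∀ i, αlo i ≤ α i ∧ α i ≤ αhi i :=
    fun α => by simp only [Set.mem_Icc, Pi.le_def, forall_and]
  have hlo : αlo ∈ Set.Icc αlo αhi := (hbox αlo).2 fun i => ⟨le_rfl, hαle i⟩
  obtain ⟨q₀, hq₀, hq₀'⟩ := hH5prop
  set A := {aq : (Fin r → ℝ) × (Y × U) | aq.1 ∈ Set.Icc αlo αhi ∧ Solves Uad e ιY Ψ aq.1 yδ aq.2}
  have hA : A.Nonempty := by
    obtain ⟨p, hp⟩ := exists_solves (ιY := ιY) (yδ := yδ) hYrefl hUrefl hH1.1 hH1.2 hH3 hH4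
      hH5coer hH6 hq₀ hq₀' hαpos hlo
    exact ⟨(αlo, p), hlo, hp⟩
  obtain ⟨a, ε, ha, -, hε, hmin⟩ :=
    ENNReal.exists_minimizing_seq hA fun aq => ENNReal.ofReal (‖ιU aq.2.2 - udag‖ ^ 2)
  obtain ⟨α₀, hα₀, φ, hφ, hlim⟩ := isCompact_Icc.tendsto_subseq fun n => (ha n).1
  obtain ⟨p₀, ψ, hψ, hp₀, hsol⟩ := exists_weakConv_subseq_solves hYrefl hUrefl hH1.1 hH1.2 hH3
    hH4 hH5coer hH6 hq₀ hq₀' hαpos (fun n => (ha (φ n)).1) hlim (fun _ => zero_le)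
    tendsto_const_nhds (fun n => (ha (φ n)).2.1)
    fun n q hq => ((ha (φ n)).2.2 q hq).trans_eq (add_zero _).symm
  refine ⟨α₀, (hbox α₀).1 hα₀, p₀, hsol, fun α hα q hq => ?_⟩
  rw [← ENNReal.ofReal_le_ofReal_iff (by positivity)]
  calc ENNReal.ofReal (‖ιU p₀.2 - udag‖ ^ 2)
      ≤ liminf (fun n => ENNReal.ofReal (‖ιU (a (φ (ψ n))).2.2 - udag‖ ^ 2)) atTop :=
        ConvexOn.weakSeqLSC_ofReal (convexOn_norm_sub_sq ιU udag) (by fun_prop) _ _ hp₀.snd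
    _ ≤ liminf ((fun _ => ENNReal.ofReal (‖ιU q.2 - udag‖ ^ 2)) + ε ∘ φ ∘ ψ) atTop :=
        liminf_le_liminf (.of_forall fun n => hmin _ (α, q) ⟨(hbox α).2 hα, hq⟩)
    _ = ENNReal.ofReal (‖ιU q.2 - udag‖ ^ 2) := by
        rw [ENNReal.liminf_add_of_right_tendsto_zero (hε.comp (hφ.comp hψ).tendsto_atTop),
          liminf_const]

/-- **Theorem 4.1** (existence of solutions of the learning problem): under (H1)–(H6),
the learning problem `(LP)` has a solution: there are `α* ∈ [αlo,αhi]` and a solution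
`(y*,u*)` of `(P_{α*,yδ})` whose distance to `u†` in `Ũ` is minimal among all
solutions of the lower level problems over all admissible parameters. -/
theorem learning_problem_has_solution
    (hYrefl : Function.Surjective (NormedSpace.inclusionInDoubleDual ℝ Y))
    (hUrefl : Function.Surjective (NormedSpace.inclusionInDoubleDual ℝ U))
    {m r : ℕ} (hm : 0 < m) (hr : 0 < r)
    (ιY : Y →L[ℝ] Ytil) (hιY : Function.Injective ιY)
    (Uad : Set U) (e : Y → U → Z) (Ψ : Fin r → U → ℝ≥0∞)
    (αlo αhi : Fin r → ℝ) (hαpos : ∀ i, 0 < αlo i) (hαle : ∀ i, αlo i ≤ αhi i)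
    (hH1 : Convex ℝ Uad ∧ IsClosed Uad)
    (hH2 : (Fad Uad e).Nonempty)
    (hH3 : ∀ (y : ℕ → Y) (u : ℕ → U) (ybar : Y) (ubar : U),
      (∀ n, u n ∈ Uad) → ubar ∈ Uad → (∀ n, e (y n) (u n) = 0) →
      WeakConv (fun n => (y n, u n)) (ybar, ubar) → e ybar ubar = 0)
    (hH4 : ∀ (y : ℕ → Y) (u : ℕ → U), (∀ n, (y n, u n) ∈ Fad Uad e) →
      (∃ C : ℝ, ∀ n, ‖u n‖ ≤ C) → ∃ C : ℝ, ∀ n, ‖y n‖ ≤ C)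
    (hH5coer : ∀ u : ℕ → U, Tendsto (fun n => ‖u n‖) atTop atTop →
      Tendsto (fun n => ∑ i, Ψ i (u n)) atTop (𝓝 (⊤ : ℝ≥0∞)))
    (hH5prop : ∃ p ∈ Fad Uad e, ∑ i, Ψ i p.2 ≠ ⊤)
    (hH6 : ∀ (i : Fin r) (u : ℕ → U) (ubar : U), WeakConv u ubar →
      Ψ i ubar ≤ Filter.liminf (fun n => Ψ i (u n)) atTop)
    (ιU : U →L[ℝ] Util) (hιU : Function.Injective ιU)
    (udag : Util) (yδ : Fin m → Ytil) :
    ∃ αstar : Fin r → ℝ, (∀ i, αlo i ≤ αstar i ∧ αstar i ≤ αhi i) ∧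
      ∃ p : Y × U, Solves Uad e ιY Ψ αstar yδ p ∧
        ∀ α : Fin r → ℝ, (∀ i, αlo i ≤ α i ∧ α i ≤ αhi i) →
          ∀ q : Y × U, Solves Uad e ιY Ψ α yδ q →
            ‖ιU p.2 - udag‖ ^ 2 ≤ ‖ιU q.2 - udag‖ ^ 2 :=
  learning_problem_has_solution_general hYrefl hUrefl ιY Uad e Ψ αlo αhi hαpos hαle hH1 hH3 hH4
    hH5coer hH5prop hH6 ιU udag yδ
end

section
/- Weak sequential compactness of the feasible set of the learning problem (intermediate claim in the proof of Theorem 4.1): Assume hypotheses (H1)–(H6). Then the set F = {(α,y,u) ∈ [α̲,ᾱ] × F_ad : (y,u) solves (P_{α,y_δ})} is nonempty, and every sequence (αⁿ,yⁿ,uⁿ) in F has a subsequence (α^{n_k}, y^{n_k}, u^{n_k}) such that α^{n_k} → α* in ℝ^r, (y^{n_k}, u^{n_k}) converges weakly in Y × U to some (y*,u*), and (α*,y*,u*) ∈ F. -/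
/-!
Bounded sequences in a reflexive space have weakly convergent subsequences: the closed span of
the sequence is reflexive and separable, so its dual is separable and the sequential
Banach–Alaoglu theorem applies in its bidual.

Along solutions `(αⁿ, yⁿ, uⁿ)` the values `J_{αⁿ}(yⁿ, uⁿ) ≤ J_{ᾱ}(p₀)` are bounded for a feasible
`p₀` with finite regularization, so coercivity bounds `uⁿ` and (H4) bounds `yⁿ`. After extraction
the limit is feasible by Mazur's lemma and (H3), and it solves the limit problem because `J` is
weakly lower semicontinuous jointly in `(α, y, u)` while, at a fixed competitor, it is continuous
in `α` (here `α > 0` matters, since `Ψ_i` may be `∞`). Nonemptiness is the same argument applied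
to a minimizing sequence for `α = α̲`.
-/

open Filter Topology ENNReal
open scoped RealInnerProductSpace

open NormedSpace TopologicalSpace Set

section WeakConvergence

variable {X : Type*} [NormedAddCommGroup X] [NormedSpace ℝ X]

theorem Submodule.exists_dual_eq_zero_apply_ne_zero {p : Submodule ℝ X}
    (hp : IsClosed (p : Set X)) {x : X} (hx : x ∉ p) :
    ∃ f : StrongDual ℝ X, (∀ a ∈ p, f a = 0) ∧ f x ≠ 0 := by
  have := hp -- makes `X ⧸ p` a normed space
  obtain ⟨g, hg⟩ := SeparatingDual.exists_ne_zero (R := ℝ)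
    (mt (Submodule.Quotient.mk_eq_zero p).1 hx)
  exact ⟨g.comp p.mkQL, fun a ha => by simp [(Submodule.Quotient.mk_eq_zero p).2 ha], hg⟩

theorem WeakConv.comp_tendsto {x : ℕ → X} {x₀ : X} (hx : WeakConv x x₀) {φ : ℕ → ℕ}
    (hφ : Tendsto φ atTop atTop) : WeakConv (fun k => x (φ k)) x₀ :=
  fun f => (hx f).comp hφ

theorem WeakConv.map {Y : Type*} [NormedAddCommGroup Y] [NormedSpace ℝ Y]
    {x : ℕ → X} {x₀ : X} (hx : WeakConv x x₀) (T : X →L[ℝ] Y) :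
    WeakConv (fun n => T (x n)) (T x₀) :=
  fun f => hx (f.comp T)

theorem WeakConv.prodMk_s11 {Y : Type*} [NormedAddCommGroup Y] [NormedSpace ℝ Y]
    {x : ℕ → X} {x₀ : X} {y : ℕ → Y} {y₀ : Y} (hx : WeakConv x x₀) (hy : WeakConv y y₀) :
    WeakConv (fun n => (x n, y n)) (x₀, y₀) := by
  intro f
  simp only [← f.comp_inl_add_comp_inr]
  exact (hx _).add (hy _)

theorem WeakConv.mem_of_convex_of_isClosed {s : Set X} (hs : Convex ℝ s) (hsc : IsClosed s)
    {x : ℕ → X} {x₀ : X} (hx : WeakConv x x₀) (hxs : ∀ n, x n ∈ s) : x₀ ∈ s := by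
  by_contra hx₀
  obtain ⟨f, c, hfs, hfx₀⟩ := geometric_hahn_banach_closed_point hs hsc hx₀
  exact (le_of_tendsto (hx f) (Eventually.of_forall fun n => (hfs _ (hxs n)).le)).not_gt hfx₀

theorem StrongDual.eq_zero_of_apply_eq_zero_of_norming {g : ℕ → StrongDual ℝ X} (hg : DenseRange g)
    {x : ℕ → X} (hx : ∀ k, ‖x k‖ ≤ 1) (hgx : ∀ k, ‖g k‖ ≤ 2 * ‖g k (x k)‖)
    {f : StrongDual ℝ X} (hf : ∀ k, f (x k) = 0) : f = 0 := by
  by_contra hf0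
  have hfpos : 0 < ‖f‖ := norm_pos_iff.2 hf0
  obtain ⟨k, hk⟩ := Metric.denseRange_iff.1 hg f (‖f‖ / 4) (by positivity)
  rw [dist_eq_norm'] at hk
  have hgk : ‖g k (x k)‖ ≤ ‖f - g k‖ := calc
    ‖g k (x k)‖ = ‖(f - g k) (x k)‖ := by simp [hf k]
    _ ≤ ‖f - g k‖ * ‖x k‖ := (f - g k).le_opNorm _
    _ ≤ ‖f - g k‖ := mul_le_of_le_one_right (norm_nonneg _) (hx k)
  have := norm_le_norm_add_norm_sub' f (g k)
  linarith [hgx k, norm_sub_rev f (g k)]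

theorem separableSpace_of_separableSpace_strongDual [SeparableSpace (StrongDual ℝ X)] :
    SeparableSpace X := by
  obtain ⟨g, hg⟩ := exists_dense_seq (StrongDual ℝ X)
  have hnorming : ∀ k, ∃ x : X, ‖x‖ ≤ 1 ∧ ‖g k‖ ≤ 2 * ‖g k x‖ := by
    intro k
    rcases eq_or_ne (g k) 0 with h | h
    · exact ⟨0, by simp [h]⟩
    · obtain ⟨x, hx, hgx⟩ := (g k).exists_lt_apply_of_lt_opNorm (half_lt_self (norm_pos_iff.2 h))
      exact ⟨x, hx.le, by linarith⟩
  choose x hx hgx using hnorming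
  set p := (Submodule.span ℝ (range x)).topologicalClosure
  have hp : ∀ z, z ∈ p := by
    intro z
    by_contra hz
    obtain ⟨f, hfp, hfz⟩ :=
      p.exists_dual_eq_zero_apply_ne_zero (Submodule.isClosed_topologicalClosure _) hz
    have hf0 := StrongDual.eq_zero_of_apply_eq_zero_of_norming hg hx hgx fun k => hfp _
      (Submodule.le_topologicalClosure _ (Submodule.subset_span (mem_range_self k)))
    exact hfz (by simp [hf0])
  have hsep : IsSeparable (p : Set X) := (countable_range x).isSeparable.span.closure
  rw [Submodule.eq_top_iff'.2 hp] at hsep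
  exact isSeparable_univ_iff.1 hsep

theorem Submodule.surjective_inclusionInDoubleDual {p : Submodule ℝ X} (hp : IsClosed (p : Set X))
    (hX : Function.Surjective (inclusionInDoubleDual ℝ X)) :
    Function.Surjective (inclusionInDoubleDual ℝ p) := by
  intro Λ
  let restrict : StrongDual ℝ X →L[ℝ] StrongDual ℝ p :=
    (ContinuousLinearMap.compL ℝ p X ℝ).flip p.subtypeL
  obtain ⟨x, hx⟩ := hX (Λ.comp restrict)
  have hΛ : ∀ f : StrongDual ℝ X, f x = Λ (f.comp p.subtypeL) := fun f =>
    congrArg (fun φ : StrongDual ℝ (StrongDual ℝ X) => φ f) hx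
  have hxp : x ∈ p := by
    by_contra hxp
    obtain ⟨f, hfp, hfx⟩ := p.exists_dual_eq_zero_apply_ne_zero hp hxp
    have hf0 : f.comp p.subtypeL = 0 := ContinuousLinearMap.ext fun a => hfp a a.2
    exact hfx (by rw [hΛ, hf0, map_zero])
  refine ⟨⟨x, hxp⟩, ContinuousLinearMap.ext fun g => ?_⟩
  obtain ⟨f, hfg, -⟩ := exists_extension_norm_eq p g
  have hfg' : f.comp p.subtypeL = g := ContinuousLinearMap.ext hfg
  rw [dual_def, ← hfg ⟨x, hxp⟩, ← hfg']
  exact hΛ f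

theorem exists_subseq_weakConv_of_separableSpace [SeparableSpace X]
    (hX : Function.Surjective (inclusionInDoubleDual ℝ X)) {x : ℕ → X} {C : ℝ}
    (hC : ∀ n, ‖x n‖ ≤ C) :
    ∃ φ : ℕ → ℕ, StrictMono φ ∧ ∃ x₀ : X, WeakConv (fun k => x (φ k)) x₀ := by
  have : SeparableSpace (StrongDual ℝ (StrongDual ℝ X)) :=
    hX.denseRange.separableSpace (inclusionInDoubleDual ℝ X).continuous
  have : SeparableSpace (StrongDual ℝ X) := separableSpace_of_separableSpace_strongDual
  let ξ : ℕ → WeakDual ℝ (StrongDual ℝ X) := fun n =>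
    StrongDual.toWeakDual (inclusionInDoubleDual ℝ X (x n))
  have hξ : ∀ n, ξ n ∈ WeakDual.toStrongDual ⁻¹'
      Metric.closedBall (0 : StrongDual ℝ (StrongDual ℝ X)) C := fun n =>
    (mem_closedBall_zero_iff (a := inclusionInDoubleDual ℝ X (x n))).2
      ((double_dual_bound ℝ X (x n)).trans (hC n))
  obtain ⟨Λ, -, φ, hφ, hΛ⟩ := WeakDual.isSeqCompact_closedBall ℝ (StrongDual ℝ X) 0 C hξ
  obtain ⟨x₀, hx₀⟩ := hX (WeakDual.toStrongDual Λ)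
  refine ⟨φ, hφ, x₀, fun f => ?_⟩
  have hΛf : Λ f = f x₀ := (congrArg (fun φ => φ f) hx₀).symm
  exact hΛf ▸ ((WeakDual.eval_continuous f).tendsto Λ).comp hΛ

theorem exists_subseq_weakConv_of_bounded
    (hX : Function.Surjective (inclusionInDoubleDual ℝ X)) {x : ℕ → X} {C : ℝ}
    (hC : ∀ n, ‖x n‖ ≤ C) :
    ∃ φ : ℕ → ℕ, StrictMono φ ∧ ∃ x₀ : X, WeakConv (fun k => x (φ k)) x₀ := by
  set p := (Submodule.span ℝ (range x)).topologicalClosure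
  have hpc : IsClosed (p : Set X) := Submodule.isClosed_topologicalClosure _
  have : SeparableSpace p :=
    ((countable_range x).isSeparable.span.closure : IsSeparable (p : Set X)).separableSpace
  have hmem : ∀ n, x n ∈ p := fun n =>
    Submodule.le_topologicalClosure _ (Submodule.subset_span (mem_range_self n))
  obtain ⟨φ, hφ, ξ₀, hξ₀⟩ := exists_subseq_weakConv_of_separableSpace
    (p.surjective_inclusionInDoubleDual hpc hX) (x := fun n => ⟨x n, hmem n⟩) hC
  exact ⟨φ, hφ, ξ₀, fun f => hξ₀ (f.comp p.subtypeL)⟩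

theorem exists_subseq_tendsto_weakConv {Y U A : Type*} [NormedAddCommGroup Y] [NormedSpace ℝ Y]
    [NormedAddCommGroup U] [NormedSpace ℝ U] [TopologicalSpace A]
    (hY : Function.Surjective (inclusionInDoubleDual ℝ Y))
    (hU : Function.Surjective (inclusionInDoubleDual ℝ U))
    {K : Set A} (hK : IsSeqCompact K) {α : ℕ → A} (hα : ∀ n, α n ∈ K)
    {y : ℕ → Y} {Cy : ℝ} (hy : ∀ n, ‖y n‖ ≤ Cy) {u : ℕ → U} {Cu : ℝ} (hu : ∀ n, ‖u n‖ ≤ Cu) :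
    ∃ φ : ℕ → ℕ, StrictMono φ ∧ ∃ α₀ ∈ K, ∃ y₀ u₀,
      Tendsto (fun k => α (φ k)) atTop (𝓝 α₀) ∧ WeakConv (fun k => y (φ k)) y₀ ∧
        WeakConv (fun k => u (φ k)) u₀ := by
  obtain ⟨α₀, hα₀, φ₁, hφ₁, hαφ₁⟩ := hK hα
  obtain ⟨φ₂, hφ₂, y₀, hyφ₂⟩ := exists_subseq_weakConv_of_bounded hY fun n => hy (φ₁ n)
  obtain ⟨φ₃, hφ₃, u₀, huφ₃⟩ := exists_subseq_weakConv_of_bounded hU fun n => hu (φ₁ (φ₂ n))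
  exact ⟨fun k => φ₁ (φ₂ (φ₃ k)), hφ₁.comp (hφ₂.comp hφ₃), α₀, hα₀, y₀, u₀,
    hαφ₁.comp (hφ₂.comp hφ₃).tendsto_atTop, hyφ₂.comp_tendsto hφ₃.tendsto_atTop, huφ₃⟩

end WeakConvergence

namespace ENNReal

variable {ι : Type*} {l : Filter ι}

theorem liminf_add_liminf_le_s11 (u v : ℕ → ℝ≥0∞) :
    liminf u atTop + liminf v atTop ≤ liminf (fun n => u n + v n) atTop := by
  have hmono : ∀ w : ℕ → ℝ≥0∞, Monotone fun n => ⨅ i ≥ n, w i :=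
    fun w _ _ hnm => biInf_mono fun _ hi => hnm.trans hi
  simp only [liminf_eq_iSup_iInf_of_nat]
  rw [ENNReal.iSup_add_iSup_of_monotone (hmono u) (hmono v)]
  exact iSup_mono fun n => le_iInf₂ fun i hi => add_le_add (iInf₂_le i hi) (iInf₂_le i hi)

theorem sum_liminf_le_liminf_sum_s11 {κ : Type*} (s : Finset κ) (u : κ → ℕ → ℝ≥0∞) :
    ∑ i ∈ s, liminf (u i) atTop ≤ liminf (fun n => ∑ i ∈ s, u i n) atTop := by
  classical
  induction s using Finset.induction_on with
  | empty => simp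
  | insert a s has ih =>
    simp only [Finset.sum_insert has]
    exact (add_le_add_right ih _).trans (liminf_add_liminf_le_s11 _ _)

theorem ofReal_le_liminf_of_tendsto_of_le [l.NeBot] {a b : ι → ℝ} {L : ℝ}
    (ha : Tendsto a l (𝓝 L)) (hab : ∀ n, a n ≤ b n) :
    ENNReal.ofReal L ≤ liminf (fun n => ENNReal.ofReal (b n)) l :=
  (ENNReal.tendsto_ofReal ha).liminf_eq.symm.trans_le <|
    liminf_le_liminf (Eventually.of_forall fun n => ENNReal.ofReal_le_ofReal (hab n))

theorem ofReal_mul_le_liminf {α : ℕ → ℝ} {α₀ : ℝ} (hα : Tendsto α atTop (𝓝 α₀))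
    {ψ : ℕ → ℝ≥0∞} {ψ₀ : ℝ≥0∞} (hψ : ψ₀ ≤ liminf ψ atTop) :
    ENNReal.ofReal α₀ * ψ₀ ≤ liminf (fun n => ENNReal.ofReal (α n) * ψ n) atTop := by
  rw [← (ENNReal.tendsto_ofReal hα).liminf_eq]
  exact (mul_le_mul_right hψ _).trans ENNReal.le_liminf_mul

end ENNReal

theorem exists_norm_le_of_coercive {X : Type*} [Norm X] (g : X → ℝ≥0∞)
    (hg : ∀ v : ℕ → X, Tendsto (fun n => ‖v n‖) atTop atTop →
      Tendsto (fun n => g (v n)) atTop (𝓝 ⊤))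
    {M : ℝ≥0∞} (hM : M ≠ ⊤) {u : ℕ → X} (hu : ∀ n, g (u n) ≤ M) :
    ∃ C : ℝ, ∀ n, ‖u n‖ ≤ C := by
  by_contra! h
  choose n hn using fun N : ℕ => h N
  have hgv := hg (fun N => u (n N))
    (tendsto_atTop_mono (fun N => (hn N).le) tendsto_natCast_atTop_atTop)
  obtain ⟨N, hN⟩ := (hgv.eventually (lt_mem_nhds hM.lt_top)).exists
  exact (hu (n N)).not_gt hN

theorem exists_seq_mem_tendsto_sInf_image {X : Type*} (f : X → ℝ≥0∞) {s : Set X} {x₀ : X}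
    (hx₀ : x₀ ∈ s) :
    ∃ q : ℕ → X, (∀ n, q n ∈ s) ∧ (∀ n, f (q n) ≤ f x₀) ∧
      Tendsto (fun n => f (q n)) atTop (𝓝 (sInf (f '' s))) := by
  obtain ⟨v, -, hv, hvs⟩ :=
    exists_seq_tendsto_sInf ⟨f x₀, mem_image_of_mem f hx₀⟩ (OrderBot.bddBelow (f '' s))
  choose q hqs hqv using hvs
  -- capping at `x₀` keeps the values below `f x₀` without changing the limit
  let q' : ℕ → X := fun n => if f (q n) ≤ f x₀ then q n else x₀
  have hq' : ∀ n, f (q' n) = min (v n) (f x₀) := fun n => by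
    by_cases h : f (q n) ≤ f x₀
    · simp [q', h, ← hqv n]
    · simp [q', h, ← hqv n, (not_le.1 h).le]
  refine ⟨q', fun n => ?_, fun n => (hq' n).trans_le (min_le_right _ _), ?_⟩
  · by_cases h : f (q n) ≤ f x₀ <;> simp [q', h, hqs n, hx₀]
  · simp only [hq']
    simpa [sInf_le (mem_image_of_mem f hx₀)] using hv.min (tendsto_const_nhds (x := f x₀))

section Tikhonov

variable {Y U H : Type*} [NormedAddCommGroup Y] [NormedSpace ℝ Y]
  [NormedAddCommGroup U] [NormedSpace ℝ U] [NormedAddCommGroup H] [InnerProductSpace ℝ H]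
  {m r : ℕ} (ιY : Y →L[ℝ] H) (Ψ : Fin r → U → ℝ≥0∞) (yδ : Fin m → H)

theorem WeakConv.ofReal_mul_sum_norm_sub_sq_le_liminf {ι : Type*} [Fintype ι] {w : ℕ → H}
    {w₀ : H} (hw : WeakConv w w₀) (c : ι → H) {a : ℝ} (ha : 0 ≤ a) :
    ENNReal.ofReal (a * ∑ j, ‖w₀ - c j‖ ^ 2) ≤
      liminf (fun n => ENNReal.ofReal (a * ∑ j, ‖w n - c j‖ ^ 2)) atTop := by
  -- the tangent-plane inequality `‖v‖² + 2⟪v, d⟫ ≤ ‖v + d‖²`, with `d = w n - w₀ ⇀ 0`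
  refine ENNReal.ofReal_le_liminf_of_tendsto_of_le
    (a := fun n => a * ∑ j, (‖w₀ - c j‖ ^ 2 + 2 * ⟪w₀ - c j, w n - w₀⟫)) ?_ fun n => ?_
  · have hd : ∀ j, Tendsto (fun n => ⟪w₀ - c j, w n - w₀⟫) atTop (𝓝 0) := fun j => by
      have := (hw (innerSL ℝ (w₀ - c j))).sub_const ⟪w₀ - c j, w₀⟫
      simpa only [innerSL_apply_apply, sub_self, ← inner_sub_right] using this
    have := (tendsto_finsetSum Finset.univ fun j _ => (hd j).const_mul 2).const_add
      (∑ j, ‖w₀ - c j‖ ^ 2)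
    simpa [Finset.sum_add_distrib] using this.const_mul a
  · refine mul_le_mul_of_nonneg_left (Finset.sum_le_sum fun j _ => ?_) ha
    have := norm_add_sq_real (w₀ - c j) (w n - w₀)
    rw [sub_add_sub_cancel'] at this
    nlinarith [sq_nonneg ‖w n - w₀‖]

theorem Jfun_le_liminf {α : ℕ → Fin r → ℝ} {α₀ : Fin r → ℝ} (hα : Tendsto α atTop (𝓝 α₀))
    {y : ℕ → Y} {y₀ : Y} (hy : WeakConv y y₀) {u : ℕ → U} {u₀ : U}
    (hΨ : ∀ i, Ψ i u₀ ≤ liminf (fun n => Ψ i (u n)) atTop) :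
    Jfun ιY Ψ α₀ yδ (y₀, u₀) ≤ liminf (fun n => Jfun ιY Ψ (α n) yδ (y n, u n)) atTop :=
  calc Jfun ιY Ψ α₀ yδ (y₀, u₀)
      = ENNReal.ofReal (1 / (2 * (m : ℝ)) * ∑ j, ‖ιY y₀ - yδ j‖ ^ 2)
        + ∑ i, ENNReal.ofReal (α₀ i) * Ψ i u₀ := rfl
    _ ≤ liminf (fun n => ENNReal.ofReal (1 / (2 * (m : ℝ)) * ∑ j, ‖ιY (y n) - yδ j‖ ^ 2)) atTop
        + ∑ i, liminf (fun n => ENNReal.ofReal (α n i) * Ψ i (u n)) atTop :=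
        add_le_add ((hy.map ιY).ofReal_mul_sum_norm_sub_sq_le_liminf yδ (by positivity))
          (Finset.sum_le_sum fun i _ =>
            ENNReal.ofReal_mul_le_liminf (tendsto_pi_nhds.1 hα i) (hΨ i))
    _ ≤ liminf (fun n => ENNReal.ofReal (1 / (2 * (m : ℝ)) * ∑ j, ‖ιY (y n) - yδ j‖ ^ 2)) atTop
        + liminf (fun n => ∑ i, ENNReal.ofReal (α n i) * Ψ i (u n)) atTop :=
        add_le_add_right (ENNReal.sum_liminf_le_liminf_sum_s11 _ _) _
    _ ≤ _ := ENNReal.liminf_add_liminf_le_s11 _ _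

theorem tendsto_Jfun {ι : Type*} {l : Filter ι} {α : ι → Fin r → ℝ} {α₀ : Fin r → ℝ}
    (hα : Tendsto α l (𝓝 α₀)) (hα₀ : ∀ i, 0 < α₀ i) (q : Y × U) :
    Tendsto (fun n => Jfun ιY Ψ (α n) yδ q) l (𝓝 (Jfun ιY Ψ α₀ yδ q)) :=
  tendsto_const_nhds.add <| tendsto_finsetSum _ fun i _ =>
    ENNReal.Tendsto.mul_const (ENNReal.tendsto_ofReal (tendsto_pi_nhds.1 hα i))
      (Or.inl (ENNReal.ofReal_pos.2 (hα₀ i)).ne')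

theorem Jfun_monotone (q : Y × U) : Monotone fun α => Jfun ιY Ψ α yδ q :=
  fun _ _ hαβ => add_le_add_right
    (Finset.sum_le_sum fun i _ => mul_le_mul_left (ENNReal.ofReal_le_ofReal (hαβ i)) _) _

theorem Jfun_ne_top {q : Y × U} (hq : ∑ i, Ψ i q.2 ≠ ⊤) (α : Fin r → ℝ) :
    Jfun ιY Ψ α yδ q ≠ ⊤ :=
  ENNReal.add_ne_top.2 ⟨ENNReal.ofReal_ne_top, ENNReal.sum_ne_top.2 fun i _ =>
    ENNReal.mul_ne_top ENNReal.ofReal_ne_top (ENNReal.sum_ne_top.1 hq i (Finset.mem_univ i))⟩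

theorem sum_le_mul_Jfun {αlo α : Fin r → ℝ} (hαlo : ∀ i, 0 < αlo i) (hα : αlo ≤ α)
    (q : Y × U) :
    ∑ i, Ψ i q.2 ≤ (∑ i, (ENNReal.ofReal (αlo i))⁻¹) * Jfun ιY Ψ α yδ q := by
  rw [Finset.sum_mul]
  refine Finset.sum_le_sum fun i _ => ?_
  rw [← ENNReal.mul_le_iff_le_inv (ENNReal.ofReal_pos.2 (hαlo i)).ne' ENNReal.ofReal_ne_top]
  calc ENNReal.ofReal (αlo i) * Ψ i q.2
      ≤ ENNReal.ofReal (α i) * Ψ i q.2 := mul_le_mul_left (ENNReal.ofReal_le_ofReal (hα i)) _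
    _ ≤ ∑ i, ENNReal.ofReal (α i) * Ψ i q.2 :=
        Finset.single_le_sum (f := fun i => ENNReal.ofReal (α i) * Ψ i q.2) (fun _ _ => zero_le)
          (Finset.mem_univ i)
    _ ≤ Jfun ιY Ψ α yδ q := le_add_self

end Tikhonov

section LowerLevelProblem

variable {Y U H Z : Type*} [NormedAddCommGroup Y] [NormedSpace ℝ Y]
  [NormedAddCommGroup U] [NormedSpace ℝ U] [NormedAddCommGroup H] [InnerProductSpace ℝ H]
  [Zero Z] {m r : ℕ} {Uad : Set U} {e : Y → U → Z} (ιY : Y →L[ℝ] H) (Ψ : Fin r → U → ℝ≥0∞)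
  (yδ : Fin m → H)

theorem exists_subseq_tendsto_mem_Fad_of_Jfun_le
    (hYrefl : Function.Surjective (inclusionInDoubleDual ℝ Y))
    (hUrefl : Function.Surjective (inclusionInDoubleDual ℝ U))
    {αlo αhi : Fin r → ℝ} (hαpos : ∀ i, 0 < αlo i)
    (hH1 : Convex ℝ Uad ∧ IsClosed Uad)
    (hH3 : ∀ (y : ℕ → Y) (u : ℕ → U) (ybar : Y) (ubar : U),
      (∀ n, u n ∈ Uad) → ubar ∈ Uad → (∀ n, e (y n) (u n) = 0) →
      WeakConv (fun n => (y n, u n)) (ybar, ubar) → e ybar ubar = 0)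
    (hH4 : ∀ (y : ℕ → Y) (u : ℕ → U), (∀ n, (y n, u n) ∈ Fad Uad e) →
      (∃ C : ℝ, ∀ n, ‖u n‖ ≤ C) → ∃ C : ℝ, ∀ n, ‖y n‖ ≤ C)
    (hH5coer : ∀ u : ℕ → U, Tendsto (fun n => ‖u n‖) atTop atTop →
      Tendsto (fun n => ∑ i, Ψ i (u n)) atTop (𝓝 (⊤ : ℝ≥0∞)))
    (hH6 : ∀ (i : Fin r) (u : ℕ → U) (ubar : U), WeakConv u ubar →
      Ψ i ubar ≤ Filter.liminf (fun n => Ψ i (u n)) atTop)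
    (α : ℕ → Fin r → ℝ) (hα : ∀ n, α n ∈ Icc αlo αhi) (y : ℕ → Y) (u : ℕ → U)
    (hF : ∀ n, (y n, u n) ∈ Fad Uad e) {B : ℝ≥0∞} (hB : B ≠ ⊤)
    (hJ : ∀ n, Jfun ιY Ψ (α n) yδ (y n, u n) ≤ B) :
    ∃ φ : ℕ → ℕ, StrictMono φ ∧ ∃ α₀ ∈ Icc αlo αhi, ∃ p ∈ Fad Uad e,
      Tendsto (fun k => α (φ k)) atTop (𝓝 α₀) ∧ WeakConv (fun k => (y (φ k), u (φ k))) p ∧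
        Jfun ιY Ψ α₀ yδ p ≤ liminf (fun k => Jfun ιY Ψ (α (φ k)) yδ (y (φ k), u (φ k))) atTop := by
  have hΨB : ∀ n, ∑ i, Ψ i (u n) ≤ (∑ i, (ENNReal.ofReal (αlo i))⁻¹) * B := fun n =>
    (sum_le_mul_Jfun ιY Ψ yδ hαpos (hα n).1 (y n, u n)).trans (mul_le_mul_right (hJ n) _)
  obtain ⟨Cu, hCu⟩ := exists_norm_le_of_coercive (fun v => ∑ i, Ψ i v) hH5coer
    (ENNReal.mul_ne_top (ENNReal.sum_ne_top.2 fun i _ =>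
      ENNReal.inv_ne_top.2 (ENNReal.ofReal_pos.2 (hαpos i)).ne') hB) hΨB
  obtain ⟨Cy, hCy⟩ := hH4 y u hF ⟨Cu, hCu⟩
  obtain ⟨φ, hφ, α₀, hα₀, y₀, u₀, hαφ, hyφ, huφ⟩ :=
    exists_subseq_tendsto_weakConv hYrefl hUrefl isCompact_Icc.isSeqCompact hα hCy hCu
  have hu₀ : u₀ ∈ Uad := huφ.mem_of_convex_of_isClosed hH1.1 hH1.2 fun k => (hF (φ k)).1
  have hpφ := hyφ.prodMk_s11 huφ
  refine ⟨φ, hφ, α₀, hα₀, (y₀, u₀),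
    ⟨hu₀, hH3 _ _ y₀ u₀ (fun k => (hF (φ k)).1) hu₀ (fun k => (hF (φ k)).2) hpφ⟩, hαφ, hpφ,
    Jfun_le_liminf ιY Ψ yδ hαφ hyφ fun i => hH6 i _ u₀ huφ⟩

theorem solves_of_Jfun_le_liminf {α : ℕ → Fin r → ℝ} {α₀ : Fin r → ℝ}
    (hα : Tendsto α atTop (𝓝 α₀)) (hα₀ : ∀ i, 0 < α₀ i) {p : ℕ → Y × U}
    (hp : ∀ n, Solves Uad e ιY Ψ (α n) yδ (p n)) {p₀ : Y × U} (hp₀ : p₀ ∈ Fad Uad e)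
    (hle : Jfun ιY Ψ α₀ yδ p₀ ≤ liminf (fun n => Jfun ιY Ψ (α n) yδ (p n)) atTop) :
    Solves Uad e ιY Ψ α₀ yδ p₀ :=
  ⟨hp₀, fun q hq => hle.trans <|
    (liminf_le_liminf (Eventually.of_forall fun n => (hp n).2 q hq)).trans
      (tendsto_Jfun ιY Ψ yδ hα hα₀ q).liminf_eq.le⟩

end LowerLevelProblem

variable {Y U Util Ytil Z : Type*}
  [NormedAddCommGroup Y] [NormedSpace ℝ Y] [CompleteSpace Y]
  [NormedAddCommGroup U] [NormedSpace ℝ U] [CompleteSpace U]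
  [NormedAddCommGroup Util] [InnerProductSpace ℝ Util] [CompleteSpace Util]
  [NormedAddCommGroup Ytil] [InnerProductSpace ℝ Ytil] [CompleteSpace Ytil]
  [NormedAddCommGroup Z] [NormedSpace ℝ Z] [CompleteSpace Z]

theorem learning_feasible_set_weakly_sequentially_compact_general
    (hYrefl : Function.Surjective (NormedSpace.inclusionInDoubleDual ℝ Y))
    (hUrefl : Function.Surjective (NormedSpace.inclusionInDoubleDual ℝ U))
    {m r : ℕ}
    (ιY : Y →L[ℝ] Ytil)
    (Uad : Set U) (e : Y → U → Z) (Ψ : Fin r → U → ℝ≥0∞)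
    (αlo αhi : Fin r → ℝ) (hαpos : ∀ i, 0 < αlo i) (hαle : ∀ i, αlo i ≤ αhi i)
    (hH1 : Convex ℝ Uad ∧ IsClosed Uad)
    (hH3 : ∀ (y : ℕ → Y) (u : ℕ → U) (ybar : Y) (ubar : U),
      (∀ n, u n ∈ Uad) → ubar ∈ Uad → (∀ n, e (y n) (u n) = 0) →
      WeakConv (fun n => (y n, u n)) (ybar, ubar) → e ybar ubar = 0)
    (hH4 : ∀ (y : ℕ → Y) (u : ℕ → U), (∀ n, (y n, u n) ∈ Fad Uad e) →
      (∃ C : ℝ, ∀ n, ‖u n‖ ≤ C) → ∃ C : ℝ, ∀ n, ‖y n‖ ≤ C)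
    (hH5coer : ∀ u : ℕ → U, Tendsto (fun n => ‖u n‖) atTop atTop →
      Tendsto (fun n => ∑ i, Ψ i (u n)) atTop (𝓝 (⊤ : ℝ≥0∞)))
    (hH5prop : ∃ p ∈ Fad Uad e, ∑ i, Ψ i p.2 ≠ ⊤)
    (hH6 : ∀ (i : Fin r) (u : ℕ → U) (ubar : U), WeakConv u ubar →
      Ψ i ubar ≤ Filter.liminf (fun n => Ψ i (u n)) atTop)
    (yδ : Fin m → Ytil) :
    (∃ (α : Fin r → ℝ) (p : Y × U), (∀ i, αlo i ≤ α i ∧ α i ≤ αhi i) ∧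
        Solves Uad e ιY Ψ α yδ p) ∧
    ∀ (αseq : ℕ → Fin r → ℝ) (y : ℕ → Y) (u : ℕ → U),
      (∀ n i, αlo i ≤ αseq n i ∧ αseq n i ≤ αhi i) →
      (∀ n, Solves Uad e ιY Ψ (αseq n) yδ (y n, u n)) →
      ∃ φ : ℕ → ℕ, StrictMono φ ∧ ∃ (αstar : Fin r → ℝ) (p : Y × U),
        (∀ i, Tendsto (fun k => αseq (φ k) i) atTop (𝓝 (αstar i))) ∧
        WeakConv (fun k => (y (φ k), u (φ k))) p ∧
        (∀ i, αlo i ≤ αstar i ∧ αstar i ≤ αhi i) ∧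
        Solves Uad e ιY Ψ αstar yδ p := by
  obtain ⟨p₀, hp₀, hΨp₀⟩ := hH5prop
  have extract := exists_subseq_tendsto_mem_Fad_of_Jfun_le ιY Ψ yδ hYrefl hUrefl
    (αhi := αhi) hαpos hH1 hH3 hH4 hH5coer hH6
  refine ⟨?_, fun αseq y u hbox hsol => ?_⟩
  · obtain ⟨q, hqF, hqJ, hq⟩ := exists_seq_mem_tendsto_sInf_image (Jfun ιY Ψ αlo yδ) hp₀
    obtain ⟨φ, hφ, α₀, -, p, hp, hα₀, -, hle⟩ := extract (fun _ => αlo)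
      (fun _ => ⟨le_rfl, hαle⟩) (fun n => (q n).1) (fun n => (q n).2) hqF
      (Jfun_ne_top ιY Ψ yδ hΨp₀ αlo) hqJ
    obtain rfl : α₀ = αlo := tendsto_nhds_unique hα₀ tendsto_const_nhds
    refine ⟨α₀, p, fun i => ⟨le_rfl, hαle i⟩, hp, fun q' hq' => hle.trans ?_⟩
    exact (hq.comp hφ.tendsto_atTop).liminf_eq.trans_le (sInf_le (mem_image_of_mem _ hq'))
  · obtain ⟨φ, hφ, α₀, hα₀, p, hp, hαφ, hpφ, hle⟩ :=
      extract αseq (fun n => ⟨fun i => (hbox n i).1, fun i => (hbox n i).2⟩) y u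
        (fun n => (hsol n).1)
        (Jfun_ne_top ιY Ψ yδ hΨp₀ αhi) fun n => ((hsol n).2 p₀ hp₀).trans
          (Jfun_monotone ιY Ψ yδ p₀ fun i => (hbox n i).2)
    exact ⟨φ, hφ, α₀, p, tendsto_pi_nhds.1 hαφ, hpφ, fun i => ⟨hα₀.1 i, hα₀.2 i⟩,
      solves_of_Jfun_le_liminf ιY Ψ yδ hαφ (fun i => (hαpos i).trans_le (hα₀.1 i))
        (fun k => hsol (φ k)) hp hle⟩

/-- Weak sequential compactness of the feasible set of the learning problem
(intermediate claim in the proof of Theorem 4.1), under (H1)–(H6): the feasible set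
`F = {(α,y,u) : α ∈ [αlo,αhi], (y,u) solves (P_{α,yδ})}` is nonempty, and every
sequence in `F` has a subsequence whose parameters converge and whose states/controls
converge weakly, with limit again in `F`. -/
theorem learning_feasible_set_weakly_sequentially_compact
    (hYrefl : Function.Surjective (NormedSpace.inclusionInDoubleDual ℝ Y))
    (hUrefl : Function.Surjective (NormedSpace.inclusionInDoubleDual ℝ U))
    {m r : ℕ} (hm : 0 < m) (hr : 0 < r)
    (ιY : Y →L[ℝ] Ytil) (hιY : Function.Injective ιY)
    (Uad : Set U) (e : Y → U → Z) (Ψ : Fin r → U → ℝ≥0∞)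
    (αlo αhi : Fin r → ℝ) (hαpos : ∀ i, 0 < αlo i) (hαle : ∀ i, αlo i ≤ αhi i)
    (hH1 : Convex ℝ Uad ∧ IsClosed Uad)
    (hH2 : (Fad Uad e).Nonempty)
    (hH3 : ∀ (y : ℕ → Y) (u : ℕ → U) (ybar : Y) (ubar : U),
      (∀ n, u n ∈ Uad) → ubar ∈ Uad → (∀ n, e (y n) (u n) = 0) →
      WeakConv (fun n => (y n, u n)) (ybar, ubar) → e ybar ubar = 0)
    (hH4 : ∀ (y : ℕ → Y) (u : ℕ → U), (∀ n, (y n, u n) ∈ Fad Uad e) →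
      (∃ C : ℝ, ∀ n, ‖u n‖ ≤ C) → ∃ C : ℝ, ∀ n, ‖y n‖ ≤ C)
    (hH5coer : ∀ u : ℕ → U, Tendsto (fun n => ‖u n‖) atTop atTop →
      Tendsto (fun n => ∑ i, Ψ i (u n)) atTop (𝓝 (⊤ : ℝ≥0∞)))
    (hH5prop : ∃ p ∈ Fad Uad e, ∑ i, Ψ i p.2 ≠ ⊤)
    (hH6 : ∀ (i : Fin r) (u : ℕ → U) (ubar : U), WeakConv u ubar →
      Ψ i ubar ≤ Filter.liminf (fun n => Ψ i (u n)) atTop)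
    (yδ : Fin m → Ytil) :
    (∃ (α : Fin r → ℝ) (p : Y × U), (∀ i, αlo i ≤ α i ∧ α i ≤ αhi i) ∧
        Solves Uad e ιY Ψ α yδ p) ∧
    ∀ (αseq : ℕ → Fin r → ℝ) (y : ℕ → Y) (u : ℕ → U),
      (∀ n i, αlo i ≤ αseq n i ∧ αseq n i ≤ αhi i) →
      (∀ n, Solves Uad e ιY Ψ (αseq n) yδ (y n, u n)) →
      ∃ φ : ℕ → ℕ, StrictMono φ ∧ ∃ (αstar : Fin r → ℝ) (p : Y × U),
        (∀ i, Tendsto (fun k => αseq (φ k) i) atTop (𝓝 (αstar i))) ∧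
        WeakConv (fun k => (y (φ k), u (φ k))) p ∧
        (∀ i, αlo i ≤ αstar i ∧ αstar i ≤ αhi i) ∧
        Solves Uad e ιY Ψ αstar yδ p :=
  learning_feasible_set_weakly_sequentially_compact_general hYrefl hUrefl ιY Uad e Ψ αlo αhi hαpos
    hαle hH1 hH3 hH4 hH5coer hH5prop hH6 yδ
end
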